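/- Let q be a real number with q > 1, let r ≥ 1 be a natural number, and let s be a complex number with Re(s) > r. Then ∏_{1 ≤ i < j ≤ 2r} (1 − q^{−2(2s+2r−i−j+2)}) / (1 − q^{−2(2s+2r−i−j+1)}) · ∏_{i=1}^{2r} (q^{−(2s+2r−2i)} − 1) / ( q · (1 − q^{−(2s+2r−2i+1)}) ) = −q^{−2s} · ∏_{i=1}^{2r} (1 − (−1)^i q^{−(2s+i)}) / (1 − (−1)^i q^{−(2s−i+1)}) · (1 − q^{2s−2r}) / (1 − q^{−(2s+2r)}). (Under the hypothesis Re(s) > r every denominator occurring is nonzero.) -/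

import Mathlib

/-!
Put `w = q ^ (-(2s + 2r))`. Every factor becomes `1 ± w q ^ e` with `0 ≤ e ≤ 4r`, and these are
nonzero because `‖w q ^ e‖ = q ^ (e - 2 Re s - 2r) < 1`. Since
`1 - (w q ^ m) ^ 2 = (1 - w q ^ m) (1 + w q ^ m)`, the double product telescopes in `i` to
`∏ j, (1 - (w q ^ j) ^ 2) / (1 - (w q ^ (2j)) ^ 2)`. Splitting the alternating products on the
right by the parity of the index, the identity reduces, after clearing denominators, to an equality
between two products of the same factors `1 ± w q ^ e`.
-/

open Finset

namespace Finset

theorem prod_range_div'_of_ne_zero {G₀ : Type*} [CommGroupWithZero G₀] (f : ℕ → G₀) {n : ℕ}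
    (hf : ∀ i ≤ n, f i ≠ 0) : ∏ i ∈ range n, f i / f (i + 1) = f 0 / f n := by
  induction n with
  | zero => simp [div_self (hf 0 le_rfl)]
  | succ n ih =>
    rw [prod_range_succ, ih fun i hi => hf i (by omega), div_mul_div_cancel₀ (hf n (by omega))]

theorem prod_range_two_mul {M : Type*} [CommMonoid M] (f : ℕ → M) (n : ℕ) :
    ∏ k ∈ range (2 * n), f k = ∏ k ∈ range n, f (2 * k) * f (2 * k + 1) := by
  induction n with
  | zero => simp
  | succ n ih => rw [mul_add_one, prod_range_succ, prod_range_succ, prod_range_succ, ih, mul_assoc]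

theorem prod_Icc_one_eq_prod_range {M : Type*} [CommMonoid M] (f : ℕ → M) (n : ℕ) :
    ∏ i ∈ Icc 1 n, f i = ∏ k ∈ range n, f (k + 1) := by
  rw [← Ico_add_one_right_eq_Icc, prod_Ico_eq_prod_range, Nat.add_sub_cancel]
  simp_rw [add_comm 1]

theorem prod_Icc_one_eq_prod_range_sub {M : Type*} [CommMonoid M] (f : ℕ → M) (n : ℕ) :
    ∏ i ∈ Icc 1 n, f i = ∏ k ∈ range n, f (n - k) := by
  rw [prod_Icc_one_eq_prod_range, ← prod_range_reflect]
  refine prod_congr rfl fun k hk => ?_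
  rw [mem_range] at hk
  congr 1
  omega

theorem prod_range_prod_range_div_succ {G₀ : Type*} [CommGroupWithZero G₀] (f : ℕ → G₀) {n : ℕ}
    (hf : ∀ e < 2 * n, f e ≠ 0) :
    ∏ j ∈ range n, ∏ i ∈ range j, f (j + i) / f (j + i + 1) = ∏ j ∈ range n, f j / f (2 * j) := by
  refine prod_congr rfl fun j hj => ?_
  rw [mem_range] at hj
  have h := prod_range_div'_of_ne_zero (fun i => f (j + i)) (n := j) fun i hi => hf _ (by omega)
  rwa [add_zero, ← two_mul] at h

end Finset

/-- Both sides are products of the same multiset of values of `f` and `g`. -/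
theorem prod_range_rearrange {M : Type*} [CommMonoid M] (f g : ℕ → M) (r : ℕ) :
    (∏ j ∈ range (2 * r), f j * g j) * (f 0 * ∏ i ∈ range (2 * r), f (2 * i + 2)) *
      ∏ a ∈ range r, g (2 * r + 2 * a) * f (2 * r + 2 * a + 1) =
    (∏ a ∈ range r, f (2 * a) * g (2 * a + 1)) * (∏ j ∈ range (2 * r), f (2 * j) * g (2 * j)) *
      (f (4 * r) * ∏ i ∈ range (2 * r), f (2 * i + 1)) := by
  have hshift : f 0 * ∏ i ∈ range (2 * r), f (2 * i + 2) =
      f (4 * r) * ∏ i ∈ range (2 * r), f (2 * i) := by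
    have h := (prod_range_succ' (fun i => f (2 * i)) (2 * r)).symm.trans (prod_range_succ _ _)
    rw [mul_zero, mul_comm, show 2 * (2 * r) = 4 * r by ring, mul_comm _ (f _)] at h
    exact h
  have hsplit (φ : ℕ → M) (c : ℕ) : ∏ j ∈ range (2 * r), φ (2 * j + c) =
      (∏ a ∈ range r, φ (2 * a + c)) * ∏ a ∈ range r, φ (2 * r + 2 * a + c) := by
    rw [two_mul r, prod_range_add]
    simp only [mul_add, two_mul, add_assoc]
  have hfg := hsplit (fun j => f j * g j) 0
  have hf := hsplit f 0
  simp only [add_zero] at hfg hf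
  rw [hshift, prod_range_two_mul (fun j => f j * g j), hfg, hf, hsplit f 1]
  simp only [prod_mul_distrib]
  ac_rfl

section Field

variable {K : Type*} [Field K] (Q : K)

theorem prod_range_two_mul_one_add_neg_one_pow_mul (x : K) (c n : ℕ) :
    ∏ k ∈ range (2 * n), (1 + (-1) ^ k * x * Q ^ (c + k)) =
      ∏ a ∈ range n, (1 + x * Q ^ (c + 2 * a)) * (1 - x * Q ^ (c + 2 * a + 1)) := by
  rw [prod_range_two_mul]
  refine prod_congr rfl fun a _ => ?_
  rw [pow_succ, pow_mul, neg_one_sq, one_pow, add_assoc]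
  ring

theorem prod_range_two_mul_mul_pow_sub_one_div (w : K) (n : ℕ) :
    ∏ i ∈ range (2 * n), (w * Q ^ (2 * i + 2) - 1) / (Q * (1 - w * Q ^ (2 * i + 1))) =
      (∏ i ∈ range (2 * n), (1 - w * Q ^ (2 * i + 2))) /
        (Q ^ (2 * n) * ∏ i ∈ range (2 * n), (1 - w * Q ^ (2 * i + 1))) := by
  rw [prod_div_distrib, prod_mul_distrib, prod_const, card_range]
  congr 1
  simp_rw [← neg_sub (1 : K)]
  rw [prod_neg, card_range, (even_two_mul n).neg_one_pow, one_mul]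

theorem intertwining_scalar_identity (w : K) (r : ℕ) (hQ : Q ≠ 0) (hw : w ≠ 0)
    (hf : ∀ e ≤ 4 * r, 1 - w * Q ^ e ≠ 0) (hg : ∀ e ≤ 4 * r, 1 + w * Q ^ e ≠ 0) :
    (∏ j ∈ range (2 * r), ∏ i ∈ range j,
        (1 - (w * Q ^ (j + i)) ^ 2) / (1 - (w * Q ^ (j + i + 1)) ^ 2)) *
      ∏ i ∈ range (2 * r), (w * Q ^ (2 * i + 2) - 1) / (Q * (1 - w * Q ^ (2 * i + 1))) =
    -(w * Q ^ (2 * r)) *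
      ((∏ k ∈ range (2 * r), (1 - (-1) ^ k * w * Q ^ k)) /
        ∏ k ∈ range (2 * r), (1 + (-1) ^ k * w * Q ^ (2 * r + k))) *
      ((1 - (w * Q ^ (4 * r))⁻¹) / (1 - w)) := by
  have hnum : ∏ k ∈ range (2 * r), (1 - (-1) ^ k * w * Q ^ k) =
      ∏ a ∈ range r, (1 - w * Q ^ (2 * a)) * (1 + w * Q ^ (2 * a + 1)) := by
    simpa [← sub_eq_add_neg] using prod_range_two_mul_one_add_neg_one_pow_mul Q (-w) 0 r
  have hden : ∏ k ∈ range (2 * r), (1 + (-1) ^ k * w * Q ^ (2 * r + k)) =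
      ∏ a ∈ range r, (1 + w * Q ^ (2 * r + 2 * a)) * (1 - w * Q ^ (2 * r + 2 * a + 1)) :=
    prod_range_two_mul_one_add_neg_one_pow_mul Q w (2 * r) r
  have key := prod_range_rearrange (fun e => 1 - w * Q ^ e) (fun e => 1 + w * Q ^ e) r
  have hB : ∏ j ∈ range (2 * r), (1 - w * Q ^ (2 * j)) * (1 + w * Q ^ (2 * j)) ≠ 0 :=
    prod_ne_zero_iff.mpr fun j hj => by
      rw [mem_range] at hj; exact mul_ne_zero (hf _ (by omega)) (hg _ (by omega))
  have hD : ∏ i ∈ range (2 * r), (1 - w * Q ^ (2 * i + 1)) ≠ 0 :=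
    prod_ne_zero_iff.mpr fun j hj => by rw [mem_range] at hj; exact hf _ (by omega)
  have hH : ∏ a ∈ range r, (1 + w * Q ^ (2 * r + 2 * a)) * (1 - w * Q ^ (2 * r + 2 * a + 1)) ≠ 0 :=
    prod_ne_zero_iff.mpr fun j hj => by
      rw [mem_range] at hj; exact mul_ne_zero (hg _ (by omega)) (hf _ (by omega))
  have h1w : 1 - w ≠ 0 := by simpa using hf 0 (Nat.zero_le _)
  rw [pow_zero, mul_one] at key
  have hfactor (x : K) : 1 - x ^ 2 = (1 - x) * (1 + x) := by ring
  have hF (e : ℕ) (he : e < 2 * (2 * r)) : 1 - (w * Q ^ e) ^ 2 ≠ 0 := by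
    rw [hfactor]
    exact mul_ne_zero (hf e (by omega)) (hg e (by omega))
  rw [prod_range_prod_range_div_succ _ hF, prod_div_distrib, prod_range_two_mul_mul_pow_sub_one_div, hnum, hden]
  simp only [hfactor]
  field_simp
  linear_combination Q ^ (4 * r) * key

end Field

section Cpow

variable {q : ℂ}

theorem cpow_add_natCast (hq : q ≠ 0) (z : ℂ) (n : ℕ) : q ^ (z + n) = q ^ z * q ^ n := by
  rw [Complex.cpow_add _ _ hq, Complex.cpow_natCast]

variable (s : ℂ) (r : ℕ)

theorem prod_Icc_prod_Ico_one_sub_cpow_div (hq : q ≠ 0) :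
    ∏ j ∈ Icc 1 (2 * r), ∏ i ∈ Ico 1 j,
        (1 - q ^ (-(2 * (2 * s + 2 * (r : ℂ) - (i : ℂ) - (j : ℂ) + 2)))) /
          (1 - q ^ (-(2 * (2 * s + 2 * (r : ℂ) - (i : ℂ) - (j : ℂ) + 1)))) =
      ∏ j ∈ range (2 * r), ∏ i ∈ range j,
        (1 - (q ^ (-(2 * s + 2 * (r : ℂ))) * q ^ (j + i)) ^ 2) /
          (1 - (q ^ (-(2 * s + 2 * (r : ℂ))) * q ^ (j + i + 1)) ^ 2) := by
  rw [prod_Icc_one_eq_prod_range]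
  refine prod_congr rfl fun j _ => ?_
  rw [prod_Ico_eq_prod_range, Nat.add_sub_cancel]
  refine prod_congr rfl fun i _ => ?_
  simp only [← cpow_add_natCast hq, ← Complex.cpow_ofNat_mul]
  congr 3 <;> push_cast <;> ring

theorem prod_Icc_cpow_sub_one_div (hq : q ≠ 0) :
    ∏ i ∈ Icc 1 (2 * r),
        (q ^ (-(2 * s + 2 * (r : ℂ) - 2 * (i : ℂ))) - 1) /
          (q * (1 - q ^ (-(2 * s + 2 * (r : ℂ) - 2 * (i : ℂ) + 1)))) =
      ∏ i ∈ range (2 * r),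
        (q ^ (-(2 * s + 2 * (r : ℂ))) * q ^ (2 * i + 2) - 1) /
          (q * (1 - q ^ (-(2 * s + 2 * (r : ℂ))) * q ^ (2 * i + 1))) := by
  rw [prod_Icc_one_eq_prod_range]
  refine prod_congr rfl fun i _ => ?_
  simp only [← cpow_add_natCast hq]
  congr 1
  · congr 2
    push_cast
    ring
  · congr 3
    push_cast
    ring

theorem prod_Icc_one_sub_neg_one_pow_cpow_div (hq : q ≠ 0) :
    ∏ i ∈ Icc 1 (2 * r),
        (1 - (-1 : ℂ) ^ i * q ^ (-(2 * s + (i : ℂ)))) /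
          (1 - (-1 : ℂ) ^ i * q ^ (-(2 * s - (i : ℂ) + 1))) =
      (∏ k ∈ range (2 * r), (1 - (-1) ^ k * q ^ (-(2 * s + 2 * (r : ℂ))) * q ^ k)) /
        ∏ k ∈ range (2 * r), (1 + (-1) ^ k * q ^ (-(2 * s + 2 * (r : ℂ))) * q ^ (2 * r + k)) := by
  rw [prod_div_distrib]
  congr 1
  · rw [prod_Icc_one_eq_prod_range_sub]
    refine prod_congr rfl fun k hk => ?_
    rw [mem_range] at hk
    have he : -(2 * s + ((2 * r - k : ℕ) : ℂ)) = -(2 * s + 2 * (r : ℂ)) + k := by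
      rw [Nat.cast_sub hk.le]
      push_cast
      ring
    have hsign : (-1 : ℂ) ^ (2 * r - k) = (-1) ^ k :=
      neg_one_pow_congr (by rw [Nat.even_sub hk.le]; simp)
    rw [he, cpow_add_natCast hq, hsign, mul_assoc]
  · rw [prod_Icc_one_eq_prod_range]
    refine prod_congr rfl fun k _ => ?_
    have he : -(2 * s - ((k + 1 : ℕ) : ℂ) + 1) = -(2 * s + 2 * (r : ℂ)) + ((2 * r + k : ℕ) : ℂ) := by
      push_cast
      ring
    rw [he, cpow_add_natCast hq, pow_succ]
    ring

end Cpow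

theorem norm_cpow_neg_mul_pow_lt_one {q : ℝ} (hq : 1 < q) {z : ℂ} {e : ℕ} (he : (e : ℝ) < z.re) :
    ‖(q : ℂ) ^ (-z) * (q : ℂ) ^ e‖ < 1 := by
  have hq0 : 0 < q := zero_lt_one.trans hq
  rw [norm_mul, norm_pow, Complex.norm_cpow_eq_rpow_re_of_pos hq0, Complex.norm_real,
    Real.norm_of_nonneg hq0.le, ← Real.rpow_natCast, ← Real.rpow_add hq0, Complex.neg_re]
  exact Real.rpow_lt_one_of_one_lt_of_neg hq (by linarith)

section NormedRing

variable {R : Type*} [SeminormedRing R] [NormOneClass R] {x : R}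

theorem one_sub_ne_zero_of_norm_lt_one (hx : ‖x‖ < 1) : 1 - x ≠ 0 := by
  rw [sub_ne_zero]
  rintro rfl
  simp at hx

theorem one_add_ne_zero_of_norm_lt_one (hx : ‖x‖ < 1) : 1 + x ≠ 0 := by
  simpa using one_sub_ne_zero_of_norm_lt_one (x := -x) (by simpa using hx)

end NormedRing

theorem stmt_3_general (q : ℝ) (hq : 1 < q) (r : ℕ) (s : ℂ) (hs : (r : ℝ) < s.re) :
    (∏ j ∈ Finset.Icc 1 (2 * r), ∏ i ∈ Finset.Ico 1 j,
        (1 - (q : ℂ) ^ (-(2 * (2 * s + 2 * (r : ℂ) - (i : ℂ) - (j : ℂ) + 2)))) /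
          (1 - (q : ℂ) ^ (-(2 * (2 * s + 2 * (r : ℂ) - (i : ℂ) - (j : ℂ) + 1))))) *
      (∏ i ∈ Finset.Icc 1 (2 * r),
        ((q : ℂ) ^ (-(2 * s + 2 * (r : ℂ) - 2 * (i : ℂ))) - 1) /
          ((q : ℂ) * (1 - (q : ℂ) ^ (-(2 * s + 2 * (r : ℂ) - 2 * (i : ℂ) + 1))))) =
    -(q : ℂ) ^ (-(2 * s)) *
      (∏ i ∈ Finset.Icc 1 (2 * r),
        (1 - (-1 : ℂ) ^ i * (q : ℂ) ^ (-(2 * s + (i : ℂ)))) /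
          (1 - (-1 : ℂ) ^ i * (q : ℂ) ^ (-(2 * s - (i : ℂ) + 1)))) *
      ((1 - (q : ℂ) ^ (2 * s - 2 * (r : ℂ))) / (1 - (q : ℂ) ^ (-(2 * s + 2 * (r : ℂ))))) := by
  have hq0 : (q : ℂ) ≠ 0 := Complex.ofReal_ne_zero.mpr (zero_lt_one.trans hq).ne'
  set w := (q : ℂ) ^ (-(2 * s + 2 * (r : ℂ)))
  have hw : w ≠ 0 := Complex.cpow_ne_zero_iff.mpr (Or.inl hq0)
  have hsmall (e : ℕ) (he : e ≤ 4 * r) : ‖w * (q : ℂ) ^ e‖ < 1 := by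
    refine norm_cpow_neg_mul_pow_lt_one hq ?_
    have he' : (e : ℝ) ≤ 4 * r := by exact_mod_cast he
    have hre : (2 * s + 2 * (r : ℂ)).re = 2 * s.re + 2 * r := by simp
    linarith
  have hpow_neg_two_mul : -(q : ℂ) ^ (-(2 * s)) = -(w * (q : ℂ) ^ (2 * r)) := by
    rw [show -(2 * s) = -(2 * s + 2 * (r : ℂ)) + ((2 * r : ℕ) : ℂ) by push_cast; ring,
      cpow_add_natCast hq0]
  have hpow_sub : (q : ℂ) ^ (2 * s - 2 * (r : ℂ)) = (w * (q : ℂ) ^ (4 * r))⁻¹ := by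
    rw [show 2 * s - 2 * (r : ℂ) = -(-(2 * s + 2 * (r : ℂ)) + ((4 * r : ℕ) : ℂ)) by push_cast; ring,
      Complex.cpow_neg, cpow_add_natCast hq0]
  rw [prod_Icc_prod_Ico_one_sub_cpow_div s r hq0, prod_Icc_cpow_sub_one_div s r hq0,
    prod_Icc_one_sub_neg_one_pow_cpow_div s r hq0, hpow_neg_two_mul, hpow_sub]
  exact intertwining_scalar_identity _ w r hq0 hw
    (fun e he => one_sub_ne_zero_of_norm_lt_one (hsmall e he))
    (fun e he => one_add_ne_zero_of_norm_lt_one (hsmall e he))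

/-- Evaluation (from the proof of Lemma 5.4) of the scalar by which the
unnormalized intertwining operator `M(s)` acts on the almost-unramified section:
for real `q > 1`, natural `r ≥ 1`, and complex `s` with `Re s > r`,
`∏_{1 ≤ i < j ≤ 2r} (1 − q^{−2(2s+2r−i−j+2)})/(1 − q^{−2(2s+2r−i−j+1)})
  · ∏_{i=1}^{2r} (q^{−(2s+2r−2i)} − 1)/(q(1 − q^{−(2s+2r−2i+1)}))
= −q^{−2s} · ∏_{i=1}^{2r} (1 − (−1)^i q^{−(2s+i)})/(1 − (−1)^i q^{−(2s−i+1)})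
  · (1 − q^{2s−2r})/(1 − q^{−(2s+2r)})`. -/
theorem stmt_3 (q : ℝ) (hq : 1 < q) (r : ℕ) (hr : 1 ≤ r) (s : ℂ) (hs : (r : ℝ) < s.re) :
    (∏ j ∈ Finset.Icc 1 (2 * r), ∏ i ∈ Finset.Ico 1 j,
        (1 - (q : ℂ) ^ (-(2 * (2 * s + 2 * (r : ℂ) - (i : ℂ) - (j : ℂ) + 2)))) /
          (1 - (q : ℂ) ^ (-(2 * (2 * s + 2 * (r : ℂ) - (i : ℂ) - (j : ℂ) + 1))))) *
      (∏ i ∈ Finset.Icc 1 (2 * r),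
        ((q : ℂ) ^ (-(2 * s + 2 * (r : ℂ) - 2 * (i : ℂ))) - 1) /
          ((q : ℂ) * (1 - (q : ℂ) ^ (-(2 * s + 2 * (r : ℂ) - 2 * (i : ℂ) + 1))))) =
    -(q : ℂ) ^ (-(2 * s)) *
      (∏ i ∈ Finset.Icc 1 (2 * r),
        (1 - (-1 : ℂ) ^ i * (q : ℂ) ^ (-(2 * s + (i : ℂ)))) /
          (1 - (-1 : ℂ) ^ i * (q : ℂ) ^ (-(2 * s - (i : ℂ) + 1)))) *
      ((1 - (q : ℂ) ^ (2 * s - 2 * (r : ℂ))) / (1 - (q : ℂ) ^ (-(2 * s + 2 * (r : ℂ))))) :=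
  stmt_3_general q hq r s hs
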